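/- arXiv:1712.00179 — 4 statements merged into one kernel-verified Lean document; each statement's English description precedes it below -/
import Mathlib

section
/- Let E be the graph with vertices {u, v, w} and edges a : u→v, c : v→u, d : v→u, b : w→v, e : v→w, f : v→w, and let F be the graph with the same vertices and edges a' : u→v, c' : v→u, d' : v→u, b' : w→v, e' : v→u, f' : v→w. The map h : X_E → X_F sending (x_n) to (y_n), where y_n = a' if n > 0 and x_{n−1} = e, and y_n = (x_n)' otherwise (where e ↦ e', a ↦ a', etc.), is a well-defined bijection from X_E to X_F. -/
/-- The common vertex set `{u, v, w}` of the graphs `E` and `F`. -/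
inductive Vert | u | v | w
  deriving DecidableEq

/-- The edges of the graph `E`: `a : u→v`, `c d : v→u`, `b : w→v`, `e f : v→w`. -/
inductive EEdge | a | b | c | d | e | f
  deriving DecidableEq

/-- The edges of the graph `F`: `a' : u→v`, `c' d' : v→u`, `b' : w→v`,
`e' : v→u`, `f' : v→w`. -/
inductive FEdge | a' | b' | c' | d' | e' | f'
  deriving DecidableEq

instance : TopologicalSpace EEdge := ⊥
instance : DiscreteTopology EEdge := ⟨rfl⟩
instance : TopologicalSpace FEdge := ⊥
instance : DiscreteTopology FEdge := ⟨rfl⟩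

def srcE : EEdge → Vert
  | .a => .u | .c => .v | .d => .v | .b => .w | .e => .v | .f => .v

def rngE : EEdge → Vert
  | .a => .v | .c => .u | .d => .u | .b => .v | .e => .w | .f => .w

def srcF : FEdge → Vert
  | .a' => .u | .c' => .v | .d' => .v | .b' => .w | .e' => .v | .f' => .v

def rngF : FEdge → Vert
  | .a' => .v | .c' => .u | .d' => .u | .b' => .v | .e' => .u | .f' => .w

/-- The one-sided edge shift of `E`. -/
def XE : Set (ℕ → EEdge) := {x | ∀ n : ℕ, rngE (x n) = srcE (x (n + 1))}

/-- The one-sided edge shift of `F`. -/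
def XF : Set (ℕ → FEdge) := {x | ∀ n : ℕ, rngF (x n) = srcF (x (n + 1))}

/-- The shift map on one-sided sequences. -/
def sh {α : Type} (x : ℕ → α) : ℕ → α := fun n => x (n + 1)

/-- The priming map sending each edge of `E` to the correspondingly named
edge of `F`. -/
def primed : EEdge → FEdge
  | .a => .a' | .b => .b' | .c => .c' | .d => .d' | .e => .e' | .f => .f'

/-- The map `h : X_E → X_F`: `y_n = a'` if `n > 0` and `x_{n-1} = e`, and
`y_n = (x_n)'` otherwise. -/
def hmap (x : ℕ → EEdge) : ℕ → FEdge
  | 0 => primed (x 0)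
  | n + 1 => if x n = EEdge.e then FEdge.a' else primed (x (n + 1))


def unprime : FEdge → EEdge
  | .a' => .a | .b' => .b | .c' => .c | .d' => .d | .e' => .e | .f' => .f

def gmap (y : ℕ → FEdge) : ℕ → EEdge
  | 0 => unprime (y 0)
  | n + 1 => if y n = FEdge.e' then EEdge.b else unprime (y (n + 1))

lemma unprime_primed (t : EEdge) : unprime (primed t) = t := by cases t <;> rfl
lemma primed_unprime (t : FEdge) : primed (unprime t) = t := by cases t <;> rfl
lemma src_primed (t : EEdge) : srcF (primed t) = srcE t := by cases t <;> rfl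
lemma rng_primed (t : EEdge) (h : t ≠ .e) : rngF (primed t) = rngE t := by
  cases t <;> simp_all <;> rfl
lemma src_unprime (t : FEdge) : srcE (unprime t) = srcF t := by cases t <;> rfl
lemma rng_unprime (t : FEdge) (h : t ≠ .e') : rngE (unprime t) = rngF t := by
  cases t <;> simp_all <;> rfl
lemma primed_eq_e' (t : EEdge) : primed t = .e' ↔ t = .e := by cases t <;> simp [primed]
lemma unprime_eq_e (t : FEdge) : unprime t = .e ↔ t = .e' := by cases t <;> simp [unprime]
lemma srcE_eq_w (t : EEdge) (h : srcE t = .w) : t = .b := by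
  cases t <;> simp_all [srcE]
lemma srcF_eq_u (t : FEdge) (h : srcF t = .u) : t = .a' := by
  cases t <;> simp_all [srcF]

lemma hmap_eq_e' {x : ℕ → EEdge} (hx : x ∈ XE) (n : ℕ) :
    hmap x n = .e' ↔ x n = .e := by
  cases n with
  | zero => exact primed_eq_e' (x 0)
  | succ m =>
    show (if x m = EEdge.e then FEdge.a' else primed (x (m + 1))) = _ ↔ _
    by_cases h : x m = EEdge.e
    · have hb : x (m + 1) = .b := srcE_eq_w _ (by rw [← hx m, h]; rfl)
      simp [h, hb]
    · simp [h, primed_eq_e']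

lemma gmap_hmap {x : ℕ → EEdge} (hx : x ∈ XE) : gmap (hmap x) = x := by
  funext n
  cases n with
  | zero => exact unprime_primed (x 0)
  | succ m =>
    show (if hmap x m = FEdge.e' then EEdge.b else unprime (hmap x (m + 1))) = _
    by_cases h : x m = EEdge.e
    · have hb : x (m + 1) = .b := srcE_eq_w _ (by rw [← hx m, h]; rfl)
      rw [if_pos ((hmap_eq_e' hx m).2 h), hb]
    · rw [if_neg (fun hc => h ((hmap_eq_e' hx m).1 hc))]
      show unprime (if x m = EEdge.e then FEdge.a' else primed (x (m + 1))) = _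
      rw [if_neg h, unprime_primed]

lemma F_succ_e' {y : ℕ → FEdge} (hy : y ∈ XF) {n : ℕ} (h : y n = .e') :
    y (n + 1) = .a' := srcF_eq_u _ (by rw [← hy n, h]; rfl)

lemma gmap_eq_e {y : ℕ → FEdge} (hy : y ∈ XF) (n : ℕ) :
    gmap y n = .e ↔ y n = .e' := by
  cases n with
  | zero => exact unprime_eq_e (y 0)
  | succ m =>
    show (if y m = FEdge.e' then EEdge.b else unprime (y (m + 1))) = _ ↔ _
    by_cases h : y m = FEdge.e'
    · simp [h, F_succ_e' hy h]
    · simp [h, unprime_eq_e]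

lemma gmap_mem {y : ℕ → FEdge} (hy : y ∈ XF) : gmap y ∈ XE := by
  intro n
  show rngE (gmap y n) = srcE (if y n = FEdge.e' then EEdge.b else unprime (y (n + 1)))
  by_cases h : y n = FEdge.e'
  · rw [if_pos h, (gmap_eq_e hy n).2 h]; rfl
  · rw [if_neg h, src_unprime, ← hy n]
    cases n with
    | zero => exact rng_unprime _ h
    | succ m =>
      show rngE (if y m = FEdge.e' then EEdge.b else unprime (y (m + 1))) = _
      by_cases hm : y m = FEdge.e'
      · rw [if_pos hm, F_succ_e' hy hm]; rfl
      · rw [if_neg hm]; exact rng_unprime _ h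

lemma hmap_gmap {y : ℕ → FEdge} (hy : y ∈ XF) : hmap (gmap y) = y := by
  funext n
  cases n with
  | zero => exact primed_unprime (y 0)
  | succ m =>
    show (if gmap y m = EEdge.e then FEdge.a' else primed (gmap y (m + 1))) = _
    by_cases h : y m = FEdge.e'
    · rw [if_pos ((gmap_eq_e hy m).2 h), F_succ_e' hy h]
    · rw [if_neg (fun hc => h ((gmap_eq_e hy m).1 hc))]
      show primed (if y m = FEdge.e' then EEdge.b else unprime (y (m + 1))) = _
      rw [if_neg h, primed_unprime]

lemma hmap_mem {x : ℕ → EEdge} (hx : x ∈ XE) : hmap x ∈ XF := by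
  intro n
  cases n with
  | zero =>
    show rngF (primed (x 0)) = srcF (if x 0 = EEdge.e then FEdge.a' else primed (x 1))
    by_cases h : x 0 = EEdge.e
    · rw [if_pos h, h]; rfl
    · rw [if_neg h, rng_primed _ h, src_primed, hx 0]
  | succ m =>
    show rngF (if x m = EEdge.e then FEdge.a' else primed (x (m + 1))) =
      srcF (if x (m + 1) = EEdge.e then FEdge.a' else primed (x (m + 2)))
    by_cases h : x m = EEdge.e
    · have hb : x (m + 1) = .b := srcE_eq_w _ (by rw [← hx m, h]; rfl)
      rw [if_pos h, if_neg (by simp [hb]), src_primed, ← hx (m + 1), hb]; rfl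
    · rw [if_neg h]
      by_cases h1 : x (m + 1) = EEdge.e
      · rw [if_pos h1, h1]; rfl
      · rw [if_neg h1, rng_primed _ h1, src_primed, hx (m + 1)]

/-- The map `h` is a well-defined bijection from `X_E` to `X_F`. -/
theorem hmap_bijOn : Set.BijOn hmap XE XF := by
  refine ⟨fun x hx => hmap_mem hx, fun x hx x' hx' h => ?_, fun y hy => ⟨gmap y, gmap_mem hy, hmap_gmap hy⟩⟩
  rw [← gmap_hmap hx, ← gmap_hmap hx', h]
end

section
/- The one-sided edge shifts (X_E, σ_E) and (X_F, σ_F) of the graphs E and F are not conjugate: there exists no homeomorphism h : X_E → X_F with h ∘ σ_E = σ_F ∘ h. -/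
/-- The shift map of `E` lifted to the subtype `X_E`. -/
def shE (x : XE) : XE := ⟨sh x.1, fun n => x.2 (n + 1)⟩

/-- The shift map of `F` lifted to the subtype `X_F`. -/
def shF (y : XF) : XF := ⟨sh y.1, fun n => y.2 (n + 1)⟩

/-- Prepend an edge to a sequence. -/
def consE (g : EEdge) (x : ℕ → EEdge) : ℕ → EEdge
  | 0 => g
  | n + 1 => x n

lemma consE_mem {g : EEdge} {x : ℕ → EEdge} (hx : x ∈ XE)
    (hg : rngE g = srcE (x 0)) : consE g x ∈ XE := by
  intro n
  cases n with
  | zero => exact hg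
  | succ m => exact hx m

lemma shE_consE {g : EEdge} {x : ℕ → EEdge} (hx : x ∈ XE)
    (hg : rngE g = srcE (x 0)) :
    shE ⟨consE g x, consE_mem hx hg⟩ = ⟨x, hx⟩ := by
  apply Subtype.ext
  funext n
  rfl

lemma rngF_eq_w : ∀ g : FEdge, rngF g = Vert.w → g = FEdge.f' := by
  intro g hg
  cases g <;> simp_all [rngF]

/-- The one-sided edge shifts `(X_E, σ_E)` and `(X_F, σ_F)` are not conjugate:
there is no homeomorphism `h : X_E → X_F` with `h ∘ σ_E = σ_F ∘ h`. -/
theorem XE_XF_not_conjugate :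
    ¬ ∃ h : XE ≃ₜ XF, ∀ x : XE, h (shE x) = shF (h x) := by
  rintro ⟨h, hc⟩
  -- the point y = (b' f')^∞ in X_F
  set yfun : ℕ → FEdge := fun n => if n % 2 = 0 then FEdge.b' else FEdge.f' with hyfun
  have hy : yfun ∈ XF := by
    intro n
    rcases Nat.even_or_odd n with he | ho
    · have h1 : n % 2 = 0 := Nat.even_iff.mp he
      have h2 : (n + 1) % 2 = 1 := by omega
      simp only [hyfun, h1, h2]
      decide
    · have h1 : n % 2 = 1 := Nat.odd_iff.mp ho
      have h2 : (n + 1) % 2 = 0 := by omega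
      simp only [hyfun, h1, h2]
      decide
  set y : XF := ⟨yfun, hy⟩ with hydef
  set x : XE := h.symm y with hxdef
  -- two distinct edges into the source vertex of x
  obtain ⟨g1, g2, hg1, hg2, hne⟩ :
      ∃ g1 g2 : EEdge, rngE g1 = srcE (x.1 0) ∧ rngE g2 = srcE (x.1 0) ∧ g1 ≠ g2 := by
    cases hv : srcE (x.1 0) with
    | u => exact ⟨.c, .d, by decide, by decide, by decide⟩
    | v => exact ⟨.a, .b, by decide, by decide, by decide⟩
    | w => exact ⟨.e, .f, by decide, by decide, by decide⟩
  set x1 : XE := ⟨consE g1 x.1, consE_mem x.2 hg1⟩ with hx1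
  set x2 : XE := ⟨consE g2 x.1, consE_mem x.2 hg2⟩ with hx2
  have hsh1 : shE x1 = x := shE_consE x.2 hg1
  have hsh2 : shE x2 = x := shE_consE x.2 hg2
  have hxy : h x = y := h.apply_symm_apply y
  -- shF (h x1) = y and shF (h x2) = y
  have hz1 : shF (h x1) = y := by rw [← hc x1, hsh1, hxy]
  have hz2 : shF (h x2) = y := by rw [← hc x2, hsh2, hxy]
  -- hence the tails of h x1 and h x2 equal yfun
  have ht1 : ∀ n, (h x1).1 (n + 1) = yfun n := fun n => congrFun (congrArg Subtype.val hz1) n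
  have ht2 : ∀ n, (h x2).1 (n + 1) = yfun n := fun n => congrFun (congrArg Subtype.val hz2) n
  -- and their first edges must be f'
  have h01 : (h x1).1 0 = FEdge.f' := by
    apply rngF_eq_w
    have := (h x1).2 0
    rw [ht1 0] at this
    exact this
  have h02 : (h x2).1 0 = FEdge.f' := by
    apply rngF_eq_w
    have := (h x2).2 0
    rw [ht2 0] at this
    exact this
  -- so h x1 = h x2, contradicting injectivity
  have heq : h x1 = h x2 := by
    apply Subtype.ext
    funext n
    cases n with
    | zero => rw [h01, h02]
    | succ m => rw [ht1 m, ht2 m]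
  have : x1 = x2 := h.injective heq
  apply hne
  have := congrFun (congrArg Subtype.val this) 0
  exact this
end

section
/- There exist two irreducible one-sided shifts of finite type that are eventually conjugate but not conjugate. -/
/-- The one-sided shift space `X_A` of a `{0,1}`-matrix `A`, as a type. -/
def XS {N : ℕ} (A : Fin N → Fin N → Bool) : Type :=
  {x : ℕ → Fin N // ∀ n : ℕ, A (x n) (x (n + 1)) = true}

instance {N : ℕ} (A : Fin N → Fin N → Bool) : TopologicalSpace (XS A) :=
  instTopologicalSpaceSubtype

/-- The shift map `σ_A : X_A → X_A`. -/
def sig {N : ℕ} (A : Fin N → Fin N → Bool) : XS A → XS A :=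
  fun x => ⟨fun n => x.1 (n + 1), fun n => x.2 (n + 1)⟩

/-- The Deaconu–Renault groupoid `G_A` of `(X_A, σ_A)`. -/
def DR {N : ℕ} (A : Fin N → Fin N → Bool) : Set (XS A × ℤ × XS A) :=
  {p | ∃ k l : ℕ, p.2.1 = (k : ℤ) - (l : ℤ) ∧ (sig A)^[k] p.1 = (sig A)^[l] p.2.2}

/-- The partially defined product `(x,n,y)(y,n',y') = (x,n+n',y')` on triples. -/
def gmul {N : ℕ} (A : Fin N → Fin N → Bool) (p q : XS A × ℤ × XS A) :
    XS A × ℤ × XS A :=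
  (p.1, p.2.1 + q.2.1, q.2.2)

/-- The inversion `(x,n,y)⁻¹ = (y,-n,x)` on triples. -/
def ginv {N : ℕ} (A : Fin N → Fin N → Bool) (p : XS A × ℤ × XS A) :
    XS A × ℤ × XS A :=
  (p.2.2, -p.2.1, p.1)

/-- `A` is irreducible: for all states `i, j` there is a path of positive
length from `i` to `j`. -/
def Irreducible' {N : ℕ} (A : Fin N → Fin N → Bool) : Prop :=
  ∀ i j : Fin N, Relation.TransGen (fun i j : Fin N => A i j = true) i j

/-! ### The example

Take the graph `E` with one vertex and four loops `e0, e1, e2, e3`, and two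
balanced in-splits of it: `F₁` with classes `{e0}, {e1,e2,e3}` and `F₂` with
classes `{e0,e1}, {e2,e3}`.  The corresponding one-sided shifts of finite
type have states `s = 2*e + i` (edge `e ∈ Fin 4`, copy `i ∈ Fin 2`), and a
transition `s → t` is allowed iff the copy-index of `t` equals the class of
the edge of `s`.  These two shifts are eventually conjugate (with lag 1) via
the map that keeps the edge components and recomputes the copy-indices, but
they are not conjugate: in the first shift some points have exactly 2
preimages under the shift map, while in the second every point has 4. -/

/-- Class map of the in-split `F₁`: edge `e = s/2` is in class `0` iff `e = 0`. -/
def cA (s : Fin 8) : ℕ := min (s.val / 2) 1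

/-- Class map of the in-split `F₂`: edge `e = s/2` is in class `e / 2`. -/
def cB (s : Fin 8) : ℕ := s.val / 4

/-- Transition matrix of the first shift. -/
def A8 : Fin 8 → Fin 8 → Bool := fun s t => t.val % 2 == cA s

/-- Transition matrix of the second shift. -/
def B8 : Fin 8 → Fin 8 → Bool := fun s t => t.val % 2 == cB s

/-- Keep the edge component of `s`, replace the copy-index by `j % 2`. -/
def re (s : Fin 8) (j : ℕ) : Fin 8 :=
  ⟨2 * (s.val / 2) + j % 2, by have := s.isLt; omega⟩

lemma A8_iff (s t : Fin 8) : A8 s t = true ↔ t.val % 2 = cA s := by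
  simp [A8]

lemma B8_iff (s t : Fin 8) : B8 s t = true ↔ t.val % 2 = cB s := by
  simp [B8]

lemma re_mod (s : Fin 8) (j : ℕ) : (re s j).val % 2 = j % 2 := by
  simp only [re]; omega

lemma cA_re (s : Fin 8) (j : ℕ) : cA (re s j) = cA s := by
  simp only [cA, re]; omega

lemma cB_re (s : Fin 8) (j : ℕ) : cB (re s j) = cB s := by
  simp only [cB, re]; omega

lemma cA_le (s : Fin 8) : cA s ≤ 1 := by
  simp only [cA]; omega

lemma cB_le (s : Fin 8) : cB s ≤ 1 := by
  have := s.isLt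
  simp only [cB]; omega

/-- The raw forward map: keep edges, recompute copy-indices using `cB`. -/
def hraw (x : ℕ → Fin 8) : ℕ → Fin 8
  | 0 => x 0
  | m + 1 => re (x (m + 1)) (cB (x m))

/-- The raw backward map: keep edges, recompute copy-indices using `cA`. -/
def graw (y : ℕ → Fin 8) : ℕ → Fin 8
  | 0 => y 0
  | m + 1 => re (y (m + 1)) (cA (y m))

lemma cB_hraw (x : ℕ → Fin 8) (n : ℕ) : cB (hraw x n) = cB (x n) := by
  cases n with
  | zero => rfl
  | succ m => simp [hraw, cB_re]

lemma cA_hraw (x : ℕ → Fin 8) (n : ℕ) : cA (hraw x n) = cA (x n) := by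
  cases n with
  | zero => rfl
  | succ m => simp [hraw, cA_re]

lemma cB_graw (y : ℕ → Fin 8) (n : ℕ) : cB (graw y n) = cB (y n) := by
  cases n with
  | zero => rfl
  | succ m => simp [graw, cB_re]

lemma cA_graw (y : ℕ → Fin 8) (n : ℕ) : cA (graw y n) = cA (y n) := by
  cases n with
  | zero => rfl
  | succ m => simp [graw, cA_re]

lemma hraw_mem (x : ℕ → Fin 8) (n : ℕ) :
    B8 (hraw x n) (hraw x (n + 1)) = true := by
  rw [B8_iff]
  show (re (x (n + 1)) (cB (x n))).val % 2 = cB (hraw x n)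
  rw [re_mod, cB_hraw]
  have := cB_le (x n)
  omega

lemma graw_mem (y : ℕ → Fin 8) (n : ℕ) :
    A8 (graw y n) (graw y (n + 1)) = true := by
  rw [A8_iff]
  show (re (y (n + 1)) (cA (y n))).val % 2 = cA (graw y n)
  rw [re_mod, cA_graw]
  have := cA_le (y n)
  omega

lemma re_eq_self (t : Fin 8) (j : ℕ) (hj : t.val % 2 = j % 2) : re t j = t := by
  apply Fin.ext
  simp only [re]
  omega

lemma graw_hraw (x : ℕ → Fin 8) (hx : ∀ n, A8 (x n) (x (n + 1)) = true) :
    graw (hraw x) = x := by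
  funext n
  cases n with
  | zero => rfl
  | succ m =>
    show re (hraw x (m + 1)) (cA (hraw x m)) = x (m + 1)
    rw [cA_hraw]
    show re (re (x (m + 1)) (cB (x m))) (cA (x m)) = x (m + 1)
    apply Fin.ext
    have h1 := (A8_iff _ _).mp (hx m)
    simp only [re]
    omega

lemma hraw_graw (y : ℕ → Fin 8) (hy : ∀ n, B8 (y n) (y (n + 1)) = true) :
    hraw (graw y) = y := by
  funext n
  cases n with
  | zero => rfl
  | succ m =>
    show re (graw y (m + 1)) (cB (graw y m)) = y (m + 1)
    rw [cB_graw]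
    show re (re (y (m + 1)) (cA (y m))) (cB (y m)) = y (m + 1)
    apply Fin.ext
    have h1 := (B8_iff _ _).mp (hy m)
    simp only [re]
    omega

/-- The eventual conjugacy, as an equivalence. -/
def hEquiv : XS A8 ≃ XS B8 where
  toFun x := ⟨hraw x.1, hraw_mem x.1⟩
  invFun y := ⟨graw y.1, graw_mem y.1⟩
  left_inv x := Subtype.ext (graw_hraw x.1 x.2)
  right_inv y := Subtype.ext (hraw_graw y.1 y.2)

lemma continuous_hraw : Continuous fun x : XS A8 => (⟨hraw x.1, hraw_mem x.1⟩ : XS B8) := by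
  apply Continuous.subtype_mk
  apply continuous_pi
  intro n
  cases n with
  | zero => exact (continuous_apply 0).comp continuous_subtype_val
  | succ m =>
    show Continuous fun x : XS A8 => re (x.1 (m + 1)) (cB (x.1 m))
    have hpair : Continuous fun x : XS A8 => (x.1 (m + 1), x.1 m) :=
      ((continuous_apply (m + 1)).comp continuous_subtype_val).prodMk
        ((continuous_apply m).comp continuous_subtype_val)
    exact (continuous_of_discreteTopology
      (f := fun p : Fin 8 × Fin 8 => re p.1 (cB p.2))).comp hpair

lemma continuous_graw : Continuous fun y : XS B8 => (⟨graw y.1, graw_mem y.1⟩ : XS A8) := by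
  apply Continuous.subtype_mk
  apply continuous_pi
  intro n
  cases n with
  | zero => exact (continuous_apply 0).comp continuous_subtype_val
  | succ m =>
    show Continuous fun y : XS B8 => re (y.1 (m + 1)) (cA (y.1 m))
    have hpair : Continuous fun y : XS B8 => (y.1 (m + 1), y.1 m) :=
      ((continuous_apply (m + 1)).comp continuous_subtype_val).prodMk
        ((continuous_apply m).comp continuous_subtype_val)
    exact (continuous_of_discreteTopology
      (f := fun p : Fin 8 × Fin 8 => re p.1 (cA p.2))).comp hpair

/-- The eventual conjugacy, as a homeomorphism. -/
def hHomeo : XS A8 ≃ₜ XS B8 where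
  toEquiv := hEquiv
  continuous_toFun := continuous_hraw
  continuous_invFun := continuous_graw

lemma irreducible_aux_A : ∀ i j : Fin 8, ∃ k : Fin 8,
    A8 i k = true ∧ A8 k j = true := by decide

lemma irreducible_aux_B : ∀ i j : Fin 8, ∃ k : Fin 8,
    B8 i k = true ∧ B8 k j = true := by decide

lemma irreducible_A8 : Irreducible' A8 := by
  intro i j
  obtain ⟨k, h1, h2⟩ := irreducible_aux_A i j
  exact Relation.TransGen.head h1 (Relation.TransGen.single h2)

lemma irreducible_B8 : Irreducible' B8 := by
  intro i j
  obtain ⟨k, h1, h2⟩ := irreducible_aux_B i j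
  exact Relation.TransGen.head h1 (Relation.TransGen.single h2)

/-- For every state `u` of `B8` there are (at least) three distinct states
that can precede it. -/
lemma three_preds : ∀ u : Fin 8, ∃ t₁ t₂ t₃ : Fin 8,
    t₁ ≠ t₂ ∧ t₁ ≠ t₃ ∧ t₂ ≠ t₃ ∧
    B8 t₁ u = true ∧ B8 t₂ u = true ∧ B8 t₃ u = true := by decide

/-- At most two states of `A8` can precede the state `0`. -/
lemma two_preds_A : ∀ s : Fin 8, A8 s 0 = true → s.val < 2 := by decide

lemma A8_zero : A8 0 0 = true := by decide


/-- Prepend a predecessor state to a point of `XS B8`. -/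
def prepend (y : XS B8) (t : Fin 8) (ht : B8 t (y.1 0) = true) : XS B8 :=
  ⟨fun n => Nat.casesOn n t (fun m => y.1 m), by
    intro n
    cases n with
    | zero => exact ht
    | succ m => exact y.2 m⟩

lemma sig_prepend (y : XS B8) (t : Fin 8) (ht : B8 t (y.1 0) = true) :
    sig B8 (prepend y t ht) = y :=
  Subtype.ext (funext fun _ => rfl)

/-- Deriving a contradiction from a conjugacy: the point `xbar` (constantly 0)
has at most 2 preimages in `XS A8`, but its image has at least 3. -/
lemma absurd_three (h : XS A8 ≃ₜ XS B8)
    (hconj : ∀ x : XS A8, h (sig A8 x) = sig B8 (h x))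
    (xbar : XS A8) (hxbar0 : ∀ n, xbar.1 n = 0)
    (y : XS B8) (hy : y = h xbar)
    (t₁ t₂ t₃ : Fin 8)
    (h12 : t₁ ≠ t₂) (h13 : t₁ ≠ t₃) (h23 : t₂ ≠ t₃)
    (hB1 : B8 t₁ (y.1 0) = true) (hB2 : B8 t₂ (y.1 0) = true)
    (hB3 : B8 t₃ (y.1 0) = true) : False := by
  -- each `t` with `B8 t (y.1 0)` yields a preimage of `xbar`
  have hw : ∀ (t : Fin 8) (ht : B8 t (y.1 0) = true),
      sig A8 (h.symm (prepend y t ht)) = xbar := by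
    intro t ht
    apply h.injective
    rw [hconj, Homeomorph.apply_symm_apply, sig_prepend, hy]
  have hcoord : ∀ (t : Fin 8) (ht : B8 t (y.1 0) = true) (n : ℕ),
      (h.symm (prepend y t ht)).1 (n + 1) = 0 := by
    intro t ht n
    have := congrFun (congrArg Subtype.val (hw t ht)) n
    rw [hxbar0 n] at this
    exact this
  have hval : ∀ (t : Fin 8) (ht : B8 t (y.1 0) = true),
      ((h.symm (prepend y t ht)).1 0).val < 2 := by
    intro t ht
    apply two_preds_A
    have h01 := (h.symm (prepend y t ht)).2 0
    rw [hcoord t ht 0] at h01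
    exact h01
  have hwe : ∀ (t t' : Fin 8) (ht : B8 t (y.1 0) = true)
      (ht' : B8 t' (y.1 0) = true),
      (h.symm (prepend y t ht)).1 0 = (h.symm (prepend y t' ht')).1 0 → t = t' := by
    intro t t' ht ht' h0
    have : h.symm (prepend y t ht) = h.symm (prepend y t' ht') := by
      apply Subtype.ext
      funext n
      cases n with
      | zero => exact h0
      | succ m => rw [hcoord t ht m, hcoord t' ht' m]
    have hpp : prepend y t ht = prepend y t' ht' := h.symm.injective this
    have := congrFun (congrArg Subtype.val hpp) 0
    exact this
  have v1 := hval t₁ hB1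
  have v2 := hval t₂ hB2
  have v3 := hval t₃ hB3
  have hcases : ((h.symm (prepend y t₁ hB1)).1 0).val = ((h.symm (prepend y t₂ hB2)).1 0).val ∨
      ((h.symm (prepend y t₁ hB1)).1 0).val = ((h.symm (prepend y t₃ hB3)).1 0).val ∨
      ((h.symm (prepend y t₂ hB2)).1 0).val = ((h.symm (prepend y t₃ hB3)).1 0).val := by
    omega
  rcases hcases with hc | hc | hc
  · exact h12 (hwe t₁ t₂ hB1 hB2 (Fin.ext hc))
  · exact h13 (hwe t₁ t₃ hB1 hB3 (Fin.ext hc))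
  · exact h23 (hwe t₂ t₃ hB2 hB3 (Fin.ext hc))

/-- There exist two irreducible one-sided shifts of finite type that are
eventually conjugate but not conjugate. -/
theorem exists_eventually_conjugate_not_conjugate :
    ∃ (N M : ℕ) (A : Fin N → Fin N → Bool) (B : Fin M → Fin M → Bool),
      Irreducible' A ∧ Irreducible' B ∧
      (∃ (h : XS A ≃ₜ XS B) (L : ℕ),
        (∀ x : XS A, (sig B)^[L] (h (sig A x)) = (sig B)^[L + 1] (h x)) ∧
        (∀ y : XS B, (sig A)^[L] (h.symm (sig B y)) = (sig A)^[L + 1] (h.symm y))) ∧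
      ¬ ∃ h : XS A ≃ₜ XS B, ∀ x : XS A, h (sig A x) = sig B (h x) := by
  refine ⟨8, 8, A8, B8, irreducible_A8, irreducible_B8, ?_, ?_⟩
  · -- eventual conjugacy with lag 1
    refine ⟨hHomeo, 1, ?_, ?_⟩
    · intro x
      apply Subtype.ext
      funext n
      show hraw (fun m => x.1 (m + 1)) (n + 1) = hraw x.1 (n + 1 + 1)
      show re (x.1 (n + 1 + 1)) (cB (x.1 (n + 1))) =
        re (x.1 (n + 1 + 1)) (cB (x.1 (n + 1)))
      rfl
    · intro y
      apply Subtype.ext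
      funext n
      show graw (fun m => y.1 (m + 1)) (n + 1) = graw y.1 (n + 1 + 1)
      show re (y.1 (n + 1 + 1)) (cA (y.1 (n + 1))) =
        re (y.1 (n + 1 + 1)) (cA (y.1 (n + 1)))
      rfl
  · -- not conjugate
    rintro ⟨h, hconj⟩
    -- the fixed point of `sig A8` at state 0
    have hx2 : ∀ n : ℕ, A8 ((fun _ => (0 : Fin 8)) n) ((fun _ => (0 : Fin 8)) (n + 1)) = true :=
      fun _ => A8_zero
    set xbar : XS A8 := ⟨fun _ => 0, hx2⟩ with hxbar
    set y : XS B8 := h xbar with hy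
    obtain ⟨t₁, t₂, t₃, h12, h13, h23, hB1, hB2, hB3⟩ := three_preds (y.1 0)
    exact absurd_three h hconj xbar (fun _ => rfl) y hy t₁ t₂ t₃ h12 h13 h23 hB1 hB2 hB3
end

section
/- If Φ : G_A → G_B is a groupoid isomorphism satisfying ε_B ∘ Φ = Φ ∘ ε_A and whose restriction to unit spaces induces the homeomorphism h : X_A → X_B (via x ↦ (x,0,x)), then h ∘ σ_A = σ_B ∘ h, i.e., h is a conjugacy. -/
/-- The map `ε_A(x,n,y) = (σ_A x, n, σ_A y)`. -/
def eps {N : ℕ} (A : Fin N → Fin N → Bool) (p : XS A × ℤ × XS A) :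
    XS A × ℤ × XS A :=
  (sig A p.1, p.2.1, sig A p.2.2)

/-- If a groupoid isomorphism `Φ : G_A → G_B` intertwines `ε_A` and `ε_B` and
restricts to the homeomorphism `h` on unit spaces, then `h` is a conjugacy. -/
theorem eps_intertwining_iso_implies_conjugacy (N M : ℕ) (hN : 0 < N) (hM : 0 < M)
    (A : Fin N → Fin N → Bool) (B : Fin M → Fin M → Bool)
    (Φ : XS A × ℤ × XS A → XS B × ℤ × XS B)
    (hbij : Set.BijOn Φ (DR A) (DR B))
    (hcomp : ∀ p ∈ DR A, ∀ q ∈ DR A, (p.2.2 = q.1 ↔ (Φ p).2.2 = (Φ q).1))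
    (hmul : ∀ p ∈ DR A, ∀ q ∈ DR A, p.2.2 = q.1 →
      Φ (gmul A p q) = gmul B (Φ p) (Φ q))
    (hinv : ∀ p ∈ DR A, Φ (ginv A p) = ginv B (Φ p))
    (heps : ∀ p ∈ DR A, Φ (eps A p) = eps B (Φ p))
    (h : XS A ≃ₜ XS B)
    (hunit : ∀ x : XS A, Φ (x, (0 : ℤ), x) = (h x, (0 : ℤ), h x)) :
    ∀ x : XS A, h (sig A x) = sig B (h x) := by
  intro x
  have hx : (x, (0:ℤ), x) ∈ DR A := ⟨0, 0, by simp, rfl⟩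
  have h1 := heps (x, (0:ℤ), x) hx
  have h2 : eps A (x, (0:ℤ), x) = (sig A x, (0:ℤ), sig A x) := rfl
  rw [h2, hunit, hunit] at h1
  exact congrArg Prod.fst h1
end
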